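/- Assume conditions (α) and (β) hold. Then the following three statements are equivalent: (i) S*(A,H,C,G_y) ⊆ V*(A,B,E,D_z); (ii) S_M ⊆ V*(A,B,E,D_z); (iii) S*(A,H,C,G_y) ⊆ V_m. -/

import Mathlib

noncomputable section

open Matrix Submodule

section GeneralDefs

variable {X U Y : Type*} [AddCommGroup X] [Module ℝ X] [AddCommGroup U] [Module ℝ U]
  [AddCommGroup Y] [Module ℝ Y]

/-- `V` is an `(A,B,C,D)`-output nulling subspace. -/
def IsOutputNulling (A : X →ₗ[ℝ] X) (B : U →ₗ[ℝ] X) (C : X →ₗ[ℝ] Y) (D : U →ₗ[ℝ] Y)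
    (V : Submodule ℝ X) : Prop :=
  ∀ v ∈ V, ∃ u : U, A v + B u ∈ V ∧ C v + D u = 0

/-- `S` is an `(A,B,C,D)`-input containing subspace. -/
def IsInputContaining (A : X →ₗ[ℝ] X) (B : U →ₗ[ℝ] X) (C : X →ₗ[ℝ] Y) (D : U →ₗ[ℝ] Y)
    (S : Submodule ℝ X) : Prop :=
  ∀ x ∈ S, ∀ u : U, C x + D u = 0 → A x + B u ∈ S

/-- `Vstar` is the largest `(A,B,C,D)`-output nulling subspace, i.e. `V*(A,B,C,D)`. -/
def IsMaxOutputNulling (A : X →ₗ[ℝ] X) (B : U →ₗ[ℝ] X) (C : X →ₗ[ℝ] Y) (D : U →ₗ[ℝ] Y)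
    (Vstar : Submodule ℝ X) : Prop :=
  IsOutputNulling A B C D Vstar ∧ ∀ V, IsOutputNulling A B C D V → V ≤ Vstar

/-- `Sstar` is the smallest `(A,B,C,D)`-input containing subspace, i.e. `S*(A,B,C,D)`. -/
def IsMinInputContaining (A : X →ₗ[ℝ] X) (B : U →ₗ[ℝ] X) (C : X →ₗ[ℝ] Y) (D : U →ₗ[ℝ] Y)
    (Sstar : Submodule ℝ X) : Prop :=
  IsInputContaining A B C D Sstar ∧ ∀ S, IsInputContaining A B C D S → Sstar ≤ S

/-- `V` is `(A,B,C,D)`-self bounded, where `Vstar` is the largest output nulling subspace: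
`V` is output nulling and `V ⊇ V* ∩ B(ker D)`. -/
def IsSelfBounded (A : X →ₗ[ℝ] X) (B : U →ₗ[ℝ] X) (C : X →ₗ[ℝ] Y) (D : U →ₗ[ℝ] Y)
    (Vstar V : Submodule ℝ X) : Prop :=
  IsOutputNulling A B C D V ∧ Vstar ⊓ (LinearMap.ker D).map B ≤ V

/-- `S` is `(A,B,C,D)`-self hidden, where `Sstar` is the smallest input containing subspace:
`S` is input containing and `S ⊆ S* + C⁻¹(im D)`. -/
def IsSelfHidden (A : X →ₗ[ℝ] X) (B : U →ₗ[ℝ] X) (C : X →ₗ[ℝ] Y) (D : U →ₗ[ℝ] Y)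
    (Sstar S : Submodule ℝ X) : Prop :=
  IsInputContaining A B C D S ∧ S ≤ Sstar ⊔ (LinearMap.range D).comap C

/-- `Vm` is the smallest `(A,B,C,D)`-self bounded subspace. -/
def IsMinSelfBounded (A : X →ₗ[ℝ] X) (B : U →ₗ[ℝ] X) (C : X →ₗ[ℝ] Y) (D : U →ₗ[ℝ] Y)
    (Vstar Vm : Submodule ℝ X) : Prop :=
  IsSelfBounded A B C D Vstar Vm ∧ ∀ V, IsSelfBounded A B C D Vstar V → Vm ≤ V

/-- `SM` is the largest `(A,B,C,D)`-self hidden subspace. -/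
def IsMaxSelfHidden (A : X →ₗ[ℝ] X) (B : U →ₗ[ℝ] X) (C : X →ₗ[ℝ] Y) (D : U →ₗ[ℝ] Y)
    (Sstar SM : Submodule ℝ X) : Prop :=
  IsSelfHidden A B C D Sstar SM ∧ ∀ S, IsSelfHidden A B C D Sstar S → S ≤ SM

end GeneralDefs

section MatrixDefs

variable {n m q p r s : ℕ}

/-- `⟨M|U⟩` : the smallest `M`-invariant subspace containing `U`. -/
def invHull (M : Matrix (Fin n) (Fin n) ℝ) (U : Submodule ℝ (Fin n → ℝ)) :
    Submodule ℝ (Fin n → ℝ) :=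
  sInf {W | U ≤ W ∧ ∀ x ∈ W, M.mulVec x ∈ W}

/-- `⟨U|M⟩` : the largest `M`-invariant subspace contained in `U`. -/
def invCore (M : Matrix (Fin n) (Fin n) ℝ) (U : Submodule ℝ (Fin n → ℝ)) :
    Submodule ℝ (Fin n → ℝ) :=
  sSup {W | W ≤ U ∧ ∀ x ∈ W, M.mulVec x ∈ W}

open scoped Classical in
/-- `σ(M | J₂/J₁)`: the multiset of complex roots (with multiplicity) of the characteristic
polynomial of the map induced by `M` on the quotient `J₂ ⧸ J₁`, for `M`-invariant `J₁ ≤ J₂`. -/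
def quotSpec (M : Matrix (Fin n) (Fin n) ℝ)
    (J₁ J₂ : Submodule ℝ (Fin n → ℝ)) : Multiset ℂ :=
  if h : J₁ ≤ J₂ ∧ (∀ x ∈ J₁, M.mulVec x ∈ J₁) ∧ (∀ x ∈ J₂, M.mulVec x ∈ J₂) then
    (((Submodule.mapQ (J₁.comap J₂.subtype) (J₁.comap J₂.subtype)
        (M.mulVecLin.restrict (p := J₂) (q := J₂) (fun x hx => h.2.2 x hx))
        (fun x hx => h.2.1 x.1 hx)).charpoly).map (algebraMap ℝ ℂ)).roots
  else 0

/-- `σ(M)`: the multiset of complex roots (with multiplicity) of the characteristic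
polynomial of the square matrix `M`. -/
def specMat {ι : Type*} [Fintype ι] [DecidableEq ι] (M : Matrix ι ι ℝ) : Multiset ℂ :=
  ((M.charpoly).map (algebraMap ℝ ℂ)).roots

/-- Condition (α). -/
def CondAlpha (B : Matrix (Fin n) (Fin m) ℝ) (H : Matrix (Fin n) (Fin q) ℝ)
    (Dz : Matrix (Fin r) (Fin m) ℝ) (Gz : Matrix (Fin r) (Fin q) ℝ)
    (V : Submodule ℝ (Fin n → ℝ)) : Prop :=
  ∀ w : Fin q → ℝ, ∃ u : Fin m → ℝ,
    H.mulVec w + B.mulVec u ∈ V ∧ Gz.mulVec w + Dz.mulVec u = 0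

/-- Condition (β). -/
def CondBeta (C : Matrix (Fin p) (Fin n) ℝ) (Gy : Matrix (Fin p) (Fin q) ℝ)
    (E : Matrix (Fin r) (Fin n) ℝ) (Gz : Matrix (Fin r) (Fin q) ℝ)
    (S : Submodule ℝ (Fin n → ℝ)) : Prop :=
  ∀ x ∈ S, ∀ w : Fin q → ℝ, C.mulVec x + Gy.mulVec w = 0 → E.mulVec x + Gz.mulVec w = 0

/-- `(S,V;K)` is a solution triple of DDPDOF. -/
def IsSolutionTriple (A : Matrix (Fin n) (Fin n) ℝ) (B : Matrix (Fin n) (Fin m) ℝ)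
    (H : Matrix (Fin n) (Fin q) ℝ) (C : Matrix (Fin p) (Fin n) ℝ)
    (Dy : Matrix (Fin p) (Fin m) ℝ) (Gy : Matrix (Fin p) (Fin q) ℝ)
    (E : Matrix (Fin r) (Fin n) ℝ) (Dz : Matrix (Fin r) (Fin m) ℝ)
    (Gz : Matrix (Fin r) (Fin q) ℝ)
    (S V : Submodule ℝ (Fin n → ℝ)) (K : Matrix (Fin m) (Fin p) ℝ) : Prop :=
  IsInputContaining A.mulVecLin H.mulVecLin C.mulVecLin Gy.mulVecLin S ∧
  IsOutputNulling A.mulVecLin B.mulVecLin E.mulVecLin Dz.mulVecLin V ∧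
  CondAlpha B H Dz Gz V ∧
  CondBeta C Gy E Gz S ∧
  S ≤ V ∧
  IsUnit (1 + K * Dy) ∧
  ∀ x ∈ S, ∀ w : Fin q → ℝ,
    (A + B * K * C).mulVec x + (H + B * K * Gy).mulVec w ∈ V ∧
    (E + Dz * K * C).mulVec x + (Gz + Dz * K * Gy).mulVec w = 0

/-- `F` is an `(A,B,E,Dz)`-output nulling friend of `V`. -/
def IsONFriend (A : Matrix (Fin n) (Fin n) ℝ) (B : Matrix (Fin n) (Fin m) ℝ)
    (E : Matrix (Fin r) (Fin n) ℝ) (Dz : Matrix (Fin r) (Fin m) ℝ)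
    (V : Submodule ℝ (Fin n → ℝ)) (F : Matrix (Fin m) (Fin n) ℝ) : Prop :=
  (∀ v ∈ V, (A + B * F).mulVec v ∈ V) ∧ ∀ v ∈ V, (E + Dz * F).mulVec v = 0

/-- `G` is an `(A,H,C,Gy)`-input containing friend of `S`. -/
def IsICFriend (A : Matrix (Fin n) (Fin n) ℝ) (H : Matrix (Fin n) (Fin q) ℝ)
    (C : Matrix (Fin p) (Fin n) ℝ) (Gy : Matrix (Fin p) (Fin q) ℝ)
    (S : Submodule ℝ (Fin n → ℝ)) (G : Matrix (Fin n) (Fin p) ℝ) : Prop :=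
  (∀ x ∈ S, (A + G * C).mulVec x ∈ S) ∧ LinearMap.range (H + G * Gy).mulVecLin ≤ S

/-- `σfix(V;F)`. -/
def sigmaFixV (A : Matrix (Fin n) (Fin n) ℝ) (B : Matrix (Fin n) (Fin m) ℝ)
    (Dz : Matrix (Fin r) (Fin m) ℝ) (V : Submodule ℝ (Fin n → ℝ))
    (F : Matrix (Fin m) (Fin n) ℝ) : Multiset ℂ :=
  quotSpec (A + B * F) (V ⊔ invHull A (LinearMap.range B.mulVecLin)) ⊤ +
  quotSpec (A + B * F)
    (invHull (A + B * F) (V ⊓ (LinearMap.ker Dz.mulVecLin).map B.mulVecLin)) V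

/-- `σfix(S;G)`. -/
def sigmaFixS (A : Matrix (Fin n) (Fin n) ℝ) (C : Matrix (Fin p) (Fin n) ℝ)
    (Gy : Matrix (Fin p) (Fin q) ℝ) (S : Submodule ℝ (Fin n → ℝ))
    (G : Matrix (Fin n) (Fin p) ℝ) : Multiset ℂ :=
  quotSpec (A + G * C) S
    (invCore (A + G * C) (S ⊔ (LinearMap.range Gy.mulVecLin).comap C.mulVecLin)) +
  quotSpec (A + G * C) ⊥ (S ⊓ invCore A (LinearMap.ker C.mulVecLin))

/-- `σfix(S,V;G,F) = σfix(V;F) ⊎ σfix(S;G)`. -/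
def sigmaFix (A : Matrix (Fin n) (Fin n) ℝ) (B : Matrix (Fin n) (Fin m) ℝ)
    (C : Matrix (Fin p) (Fin n) ℝ) (Gy : Matrix (Fin p) (Fin q) ℝ)
    (Dz : Matrix (Fin r) (Fin m) ℝ) (S V : Submodule ℝ (Fin n → ℝ))
    (G : Matrix (Fin n) (Fin p) ℝ) (F : Matrix (Fin m) (Fin n) ℝ) : Multiset ℂ :=
  sigmaFixV A B Dz V F + sigmaFixS A C Gy S G

/-- `W = (I - Dy·Dc)⁻¹`. -/
def clW (Dy : Matrix (Fin p) (Fin m) ℝ) (Dc : Matrix (Fin m) (Fin p) ℝ) :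
    Matrix (Fin p) (Fin p) ℝ := (1 - Dy * Dc)⁻¹

/-- The closed-loop matrix `Â`. -/
def clA (A : Matrix (Fin n) (Fin n) ℝ) (B : Matrix (Fin n) (Fin m) ℝ)
    (C : Matrix (Fin p) (Fin n) ℝ) (Dy : Matrix (Fin p) (Fin m) ℝ)
    (Ac : Matrix (Fin s) (Fin s) ℝ) (Bc : Matrix (Fin s) (Fin p) ℝ)
    (Cc : Matrix (Fin m) (Fin s) ℝ) (Dc : Matrix (Fin m) (Fin p) ℝ) :
    Matrix (Fin n ⊕ Fin s) (Fin n ⊕ Fin s) ℝ :=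
  Matrix.fromBlocks (A + B * Dc * clW Dy Dc * C) (B * Cc + B * Dc * clW Dy Dc * Dy * Cc)
    (Bc * clW Dy Dc * C) (Ac + Bc * clW Dy Dc * Dy * Cc)

/-- The closed-loop matrix `Ĥ`. -/
def clH (B : Matrix (Fin n) (Fin m) ℝ) (H : Matrix (Fin n) (Fin q) ℝ)
    (Dy : Matrix (Fin p) (Fin m) ℝ) (Gy : Matrix (Fin p) (Fin q) ℝ)
    (Bc : Matrix (Fin s) (Fin p) ℝ) (Dc : Matrix (Fin m) (Fin p) ℝ) :
    Matrix (Fin n ⊕ Fin s) (Fin q) ℝ :=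
  Matrix.fromRows (H + B * Dc * clW Dy Dc * Gy) (Bc * clW Dy Dc * Gy)

/-- The closed-loop matrix `Ĉ`. -/
def clC (C : Matrix (Fin p) (Fin n) ℝ) (Dy : Matrix (Fin p) (Fin m) ℝ)
    (E : Matrix (Fin r) (Fin n) ℝ) (Dz : Matrix (Fin r) (Fin m) ℝ)
    (Cc : Matrix (Fin m) (Fin s) ℝ) (Dc : Matrix (Fin m) (Fin p) ℝ) :
    Matrix (Fin r) (Fin n ⊕ Fin s) ℝ :=
  Matrix.fromCols (E + Dz * Dc * clW Dy Dc * C) (Dz * Cc + Dz * Dc * clW Dy Dc * Dy * Cc)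

/-- The closed-loop matrix `Ĝ`. -/
def clG (Dy : Matrix (Fin p) (Fin m) ℝ) (Gy : Matrix (Fin p) (Fin q) ℝ)
    (Dz : Matrix (Fin r) (Fin m) ℝ) (Gz : Matrix (Fin r) (Fin q) ℝ)
    (Dc : Matrix (Fin m) (Fin p) ℝ) : Matrix (Fin r) (Fin q) ℝ :=
  Gz + Dz * Dc * clW Dy Dc * Gy

/-- DDPDOF is solvable. -/
def DDPDOFSolvable (A : Matrix (Fin n) (Fin n) ℝ) (B : Matrix (Fin n) (Fin m) ℝ)
    (H : Matrix (Fin n) (Fin q) ℝ) (C : Matrix (Fin p) (Fin n) ℝ)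
    (Dy : Matrix (Fin p) (Fin m) ℝ) (Gy : Matrix (Fin p) (Fin q) ℝ)
    (E : Matrix (Fin r) (Fin n) ℝ) (Dz : Matrix (Fin r) (Fin m) ℝ)
    (Gz : Matrix (Fin r) (Fin q) ℝ) : Prop :=
  ∃ (s : ℕ) (Ac : Matrix (Fin s) (Fin s) ℝ) (Bc : Matrix (Fin s) (Fin p) ℝ)
    (Cc : Matrix (Fin m) (Fin s) ℝ) (Dc : Matrix (Fin m) (Fin p) ℝ),
    IsUnit (1 - Dy * Dc) ∧ clG Dy Gy Dz Gz Dc = 0 ∧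
    ∀ k : ℕ, clC C Dy E Dz Cc Dc * clA A B C Dy Ac Bc Cc Dc ^ k * clH B H Dy Gy Bc Dc = 0

end MatrixDefs

end

/-! Condition (α) lets the input cancel any disturbance, so
`V*(A,[B H],E,[D_z G_z]) = V*(A,B,E,D_z)`; dually, (β) gives
`S*(A,H,[C;E],[G_y;G_z]) = S*(A,H,C,G_y)`. Hence `S* ⊆ S_M` and `V_m ⊆ V*`, which gives
(ii) ⇒ (i) and (iii) ⇒ (i). Conversely, let `S* ⊆ V*`. Then `S* ∩ V_m` is input containing,
because a self bounded subspace absorbs every admissible step that stays in `V*`; so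
`S* ⊆ V_m`. And `V* + S_M` is output nulling, hence contained in `V*`. -/

section Quadruple

variable {X U W Y Z : Type*} [AddCommGroup X] [Module ℝ X] [AddCommGroup U] [Module ℝ U]
  [AddCommGroup W] [Module ℝ W] [AddCommGroup Y] [Module ℝ Y] [AddCommGroup Z] [Module ℝ Z]
  {A : X →ₗ[ℝ] X} {B : U →ₗ[ℝ] X} {C : X →ₗ[ℝ] Y} {D : U →ₗ[ℝ] Y}

theorem IsOutputNulling.of_le_sup {V V₁ V₂ : Submodule ℝ X} (hV : V ≤ V₁ ⊔ V₂)
    (h₁ : ∀ v ∈ V₁, ∃ u, A v + B u ∈ V ∧ C v + D u = 0)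
    (h₂ : ∀ v ∈ V₂, ∃ u, A v + B u ∈ V ∧ C v + D u = 0) :
    IsOutputNulling A B C D V := by
  intro v hv
  obtain ⟨v₁, hv₁, v₂, hv₂, rfl⟩ := Submodule.mem_sup.mp (hV hv)
  obtain ⟨u₁, hA₁, hC₁⟩ := h₁ v₁ hv₁
  obtain ⟨u₂, hA₂, hC₂⟩ := h₂ v₂ hv₂
  refine ⟨u₁ + u₂, ?_, ?_⟩
  · convert V.add_mem hA₁ hA₂ using 1
    simp only [map_add]; abel
  · rw [map_add, map_add, add_add_add_comm, hC₁, hC₂, add_zero]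

/-- The difference with the step provided by `V` lies in `V* ∩ B(ker D) ⊆ V`. -/
theorem IsSelfBounded.add_mem {Vstar V : Submodule ℝ X}
    (hV : IsSelfBounded A B C D Vstar V) (hle : V ≤ Vstar) {x : X} {u : U} (hx : x ∈ V)
    (hstep : A x + B u ∈ Vstar) (hout : C x + D u = 0) : A x + B u ∈ V := by
  obtain ⟨u', hA', hC'⟩ := hV.1 x hx
  have hker : u - u' ∈ LinearMap.ker D := by
    rw [LinearMap.mem_ker, map_sub, ← add_sub_add_left_eq_sub _ _ (C x), hout, hC', sub_zero]
  have hdiff : B (u - u') ∈ V := by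
    refine hV.2 ⟨?_, Submodule.mem_map_of_mem hker⟩
    rw [map_sub, ← add_sub_add_left_eq_sub _ _ (A x)]
    exact Vstar.sub_mem hstep (hle hA')
  convert V.add_mem hA' hdiff using 1
  rw [map_sub]; abel

theorem IsMinInputContaining.le_of_isMaxSelfHidden {Sstar SM : Submodule ℝ X}
    (hS : IsMinInputContaining A B C D Sstar) (hSM : IsMaxSelfHidden A B C D Sstar SM) :
    Sstar ≤ SM :=
  hSM.2 Sstar ⟨hS.1, le_sup_left⟩

theorem IsOutputNulling.coprod {V : Submodule ℝ X} (hV : IsOutputNulling A B C D V)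
    (H : W →ₗ[ℝ] X) (G : W →ₗ[ℝ] Y) :
    IsOutputNulling A (B.coprod H) C (D.coprod G) V := by
  intro v hv
  obtain ⟨u, hA, hC⟩ := hV v hv
  exact ⟨(u, 0), by simpa using hA, by simpa using hC⟩

theorem IsOutputNulling.of_coprod {H : W →ₗ[ℝ] X} {G : W →ₗ[ℝ] Y} {V : Submodule ℝ X}
    (hV : IsOutputNulling A (B.coprod H) C (D.coprod G) V)
    (hα : ∀ w, ∃ u, H w + B u ∈ V ∧ G w + D u = 0) :
    IsOutputNulling A B C D V := by
  intro v hv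
  obtain ⟨⟨u, w⟩, hA, hC⟩ := hV v hv
  obtain ⟨u', hA', hC'⟩ := hα w
  simp only [LinearMap.coprod_apply] at hA hC
  refine ⟨u - u', ?_, ?_⟩
  · convert V.sub_mem hA hA' using 1
    rw [map_sub]; abel
  · rw [map_sub]
    linear_combination (norm := module) hC - hC'

theorem IsMaxOutputNulling.eq_of_coprod {H : W →ₗ[ℝ] X} {G : W →ₗ[ℝ] Y}
    {Vstar Vstar₁ : Submodule ℝ X} (hVstar : IsMaxOutputNulling A B C D Vstar)
    (hVstar₁ : IsMaxOutputNulling A (B.coprod H) C (D.coprod G) Vstar₁)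
    (hα : ∀ w, ∃ u, H w + B u ∈ Vstar ∧ G w + D u = 0) :
    Vstar₁ = Vstar := by
  have hle : Vstar ≤ Vstar₁ := hVstar₁.2 _ (hVstar.1.coprod H G)
  refine le_antisymm (hVstar.2 _ (hVstar₁.1.of_coprod fun w => ?_)) hle
  obtain ⟨u, hA, hC⟩ := hα w
  exact ⟨u, hle hA, hC⟩

theorem IsInputContaining.prod {S : Submodule ℝ X} (hS : IsInputContaining A B C D S)
    (E : X →ₗ[ℝ] Z) (G : U →ₗ[ℝ] Z) :
    IsInputContaining A B (C.prod E) (D.prod G) S := by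
  intro x hx u hout
  exact hS x hx u (congrArg Prod.fst hout)

theorem IsInputContaining.of_prod {E : X →ₗ[ℝ] Z} {G : U →ₗ[ℝ] Z} {S : Submodule ℝ X}
    (hS : IsInputContaining A B (C.prod E) (D.prod G) S)
    (hβ : ∀ x ∈ S, ∀ u, C x + D u = 0 → E x + G u = 0) :
    IsInputContaining A B C D S := by
  intro x hx u hout
  exact hS x hx u (Prod.ext hout (hβ x hx u hout))

theorem IsMinInputContaining.eq_of_prod {E : X →ₗ[ℝ] Z} {G : U →ₗ[ℝ] Z}
    {Sstar Sstar₂ : Submodule ℝ X} (hSstar : IsMinInputContaining A B C D Sstar)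
    (hSstar₂ : IsMinInputContaining A B (C.prod E) (D.prod G) Sstar₂)
    (hβ : ∀ x ∈ Sstar, ∀ u, C x + D u = 0 → E x + G u = 0) :
    Sstar₂ = Sstar := by
  have hle : Sstar₂ ≤ Sstar := hSstar₂.2 _ (hSstar.1.prod E G)
  exact le_antisymm hle
    (hSstar.2 _ (hSstar₂.1.of_prod fun x hx u hout => hβ x (hle hx) u hout))

end Quadruple

section Plant

variable {X U W Y Z : Type*} [AddCommGroup X] [Module ℝ X] [AddCommGroup U] [Module ℝ U]
  [AddCommGroup W] [Module ℝ W] [AddCommGroup Y] [Module ℝ Y] [AddCommGroup Z] [Module ℝ Z]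
  {A : X →ₗ[ℝ] X} {B : U →ₗ[ℝ] X} {H : W →ₗ[ℝ] X} {C : X →ₗ[ℝ] Y} {Gy : W →ₗ[ℝ] Y}
  {E : X →ₗ[ℝ] Z} {Dz : U →ₗ[ℝ] Z} {Gz : W →ₗ[ℝ] Z}

theorem IsMinInputContaining.le_of_isSelfBounded {Sstar Vstar₁ Vm : Submodule ℝ X}
    (hSstar : IsMinInputContaining A H C Gy Sstar)
    (hVm : IsSelfBounded A (B.coprod H) E (Dz.coprod Gz) Vstar₁ Vm) (hVmV : Vm ≤ Vstar₁)
    (hβ : ∀ x ∈ Sstar, ∀ w, C x + Gy w = 0 → E x + Gz w = 0)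
    (hSV : Sstar ≤ Vstar₁) : Sstar ≤ Vm := by
  suffices IsInputContaining A H C Gy (Sstar ⊓ Vm) from (hSstar.2 _ this).trans inf_le_right
  rintro x ⟨hxS, hxV⟩ w hout
  have hstep := hSstar.1 x hxS w hout
  refine ⟨hstep, ?_⟩
  have habsorb := hVm.add_mem hVmV hxV (u := (0, w))
  simp only [LinearMap.coprod_apply, map_zero, zero_add] at habsorb
  exact habsorb (hSV hstep) (hβ x hxS w hout)

/-- By modularity `S_M = S* + (S_M ∩ [C;E]⁻¹ im [G_y;G_z])`. A vector `x` of the second summand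
with `(Cx, Ex) = (G_y w, G_z w)` steps under `-w` inside `S_M`, and (α) supplies an input
compensating `w`. -/
theorem IsSelfHidden.le_of_isMaxOutputNulling {Sstar Vstar SM : Submodule ℝ X}
    (hSM : IsSelfHidden A H (C.prod E) (Gy.prod Gz) Sstar SM) (hSSM : Sstar ≤ SM)
    (hVstar : IsMaxOutputNulling A B E Dz Vstar)
    (hα : ∀ w, ∃ u, H w + B u ∈ Vstar ∧ Gz w + Dz u = 0)
    (hSV : Sstar ≤ Vstar) : SM ≤ Vstar := by
  set K := (LinearMap.range (Gy.prod Gz)).comap (C.prod E)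
  have hSM_le : SM ≤ Sstar ⊔ K ⊓ SM :=
    (sup_inf_assoc_of_le K hSSM).le.trans' (le_inf hSM.2 le_rfl)
  have hON : IsOutputNulling A B E Dz (Vstar ⊔ SM) := by
    refine IsOutputNulling.of_le_sup (V₁ := Vstar) (V₂ := K ⊓ SM)
      (sup_le le_sup_left (hSM_le.trans (sup_le_sup_right hSV _))) ?_ ?_
    · intro v hv
      obtain ⟨u, hA, hC⟩ := hVstar.1 v hv
      exact ⟨u, Submodule.mem_sup_left hA, hC⟩
    · rintro x ⟨⟨w, hw⟩, hxSM⟩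
      simp only [LinearMap.prod_apply, Function.prod, Prod.mk.injEq] at hw
      obtain ⟨u, hA, hC⟩ := hα w
      have hstep : A x + H (-w) ∈ SM := hSM.1 x hxSM (-w) <| by
        rw [map_neg, add_neg_eq_zero]
        exact Prod.ext hw.1.symm hw.2.symm
      refine ⟨u, ?_, by rw [← hw.2, hC]⟩
      convert (Vstar ⊔ SM).add_mem (Submodule.mem_sup_right hstep) (Submodule.mem_sup_left hA)
        using 1
      rw [map_neg]; abel
  exact le_sup_right.trans (hVstar.2 _ hON)

end Plant

theorem stmt6 {n m q p r : ℕ}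
    (A : Matrix (Fin n) (Fin n) ℝ) (B : Matrix (Fin n) (Fin m) ℝ)
    (H : Matrix (Fin n) (Fin q) ℝ) (C : Matrix (Fin p) (Fin n) ℝ)
    (Gy : Matrix (Fin p) (Fin q) ℝ)
    (E : Matrix (Fin r) (Fin n) ℝ) (Dz : Matrix (Fin r) (Fin m) ℝ)
    (Gz : Matrix (Fin r) (Fin q) ℝ)
    (Vstar : Submodule ℝ (Fin n → ℝ))
    (hVstar : IsMaxOutputNulling A.mulVecLin B.mulVecLin E.mulVecLin Dz.mulVecLin Vstar)
    (Sstar : Submodule ℝ (Fin n → ℝ))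
    (hSstar : IsMinInputContaining A.mulVecLin H.mulVecLin C.mulVecLin Gy.mulVecLin Sstar)
    (Vstar1 : Submodule ℝ (Fin n → ℝ))
    (hVstar1 : IsMaxOutputNulling A.mulVecLin (B.mulVecLin.coprod H.mulVecLin) E.mulVecLin
      (Dz.mulVecLin.coprod Gz.mulVecLin) Vstar1)
    (Vm : Submodule ℝ (Fin n → ℝ))
    (hVm : IsMinSelfBounded A.mulVecLin (B.mulVecLin.coprod H.mulVecLin) E.mulVecLin
      (Dz.mulVecLin.coprod Gz.mulVecLin) Vstar1 Vm)
    (Sstar2 : Submodule ℝ (Fin n → ℝ))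
    (hSstar2 : IsMinInputContaining A.mulVecLin H.mulVecLin (C.mulVecLin.prod E.mulVecLin)
      (Gy.mulVecLin.prod Gz.mulVecLin) Sstar2)
    (SM : Submodule ℝ (Fin n → ℝ))
    (hSM : IsMaxSelfHidden A.mulVecLin H.mulVecLin (C.mulVecLin.prod E.mulVecLin)
      (Gy.mulVecLin.prod Gz.mulVecLin) Sstar2 SM)
    (hα : CondAlpha B H Dz Gz Vstar)
    (hβ : CondBeta C Gy E Gz Sstar) :
    (Sstar ≤ Vstar ↔ SM ≤ Vstar) ∧ (Sstar ≤ Vstar ↔ Sstar ≤ Vm) := by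
  have hV : Vstar1 = Vstar := hVstar.eq_of_coprod hVstar1 hα
  have hS : Sstar2 = Sstar := hSstar.eq_of_prod hSstar2 hβ
  have hSSM : Sstar ≤ SM := hS ▸ hSstar2.le_of_isMaxSelfHidden hSM
  have hVmV1 : Vm ≤ Vstar1 := hVstar1.2 _ hVm.1.1
  refine ⟨⟨fun h => ?_, hSSM.trans⟩, ⟨fun h => ?_, fun h => h.trans (hV ▸ hVmV1)⟩⟩
  · exact hSM.1.le_of_isMaxOutputNulling (hS ▸ hSSM) hVstar hα (hS ▸ h)
  · exact hSstar.le_of_isSelfBounded hVm.1 hVmV1 hβ (hV ▸ h)
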